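/- arXiv:2510.11354 — 2 statements merged into one kernel-verified Lean document; each statement's English description precedes it below -/
import Mathlib

section
/- Let β₁, β₂ ∈ [0, 1) with β₁² < β₂, let t ≥ 1, and let g₀, …, g_{t−1} ∈ ℝ. Define m = Σ_{τ=0}^{t−1} β₁^τ (1 − β₁) g_τ and v = Σ_{τ=0}^{t−1} β₂^τ (1 − β₂) g_τ². Then m² ≤ C · v, where C = (1 − β₁)² / ((1 − β₂)(1 − β₁²/β₂)). Consequently, for every ε > 0, |m| / (√v + ε) ≤ √C. -/
/-!
Cauchy–Schwarz with the weights `β₂^τ` gives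
`(∑ β₁^τ g_τ)² ≤ (∑ (β₁²/β₂)^τ) · ∑ β₂^τ g_τ²`, and the geometric sum of ratio `β₁²/β₂ < 1`
is at most `(1 - β₁²/β₂)⁻¹`. Taking square roots, `|m| ≤ √C √v ≤ √C (√v + ε)`.
-/

open Finset

section
variable {K : Type*} [Field K] [LinearOrder K] [IsStrictOrderedRing K]

theorem geom_sum_range_le_inv_one_sub {x : K} (hx : 0 ≤ x) (hx1 : x < 1) (n : ℕ) :
    ∑ i ∈ range n, x ^ i ≤ (1 - x)⁻¹ := by
  rw [range_eq_Ico]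
  simpa using geom_sum_Ico_le_of_lt_one (m := 0) hx hx1

theorem sq_sum_pow_mul_le {a b : K} (hab : a ^ 2 < b) (n : ℕ) (x : ℕ → K) :
    (∑ i ∈ range n, a ^ i * x i) ^ 2 ≤ (1 - a ^ 2 / b)⁻¹ * ∑ i ∈ range n, b ^ i * x i ^ 2 := by
  have hb : 0 < b := (sq_nonneg a).trans_lt hab
  have hratio : 0 ≤ a ^ 2 / b := div_nonneg (sq_nonneg a) hb.le
  have hcs : (∑ i ∈ range n, a ^ i * x i) ^ 2
      ≤ (∑ i ∈ range n, (a ^ 2 / b) ^ i) * ∑ i ∈ range n, b ^ i * x i ^ 2 := by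
    refine sum_sq_le_sum_mul_sum_of_sq_le_mul _ (fun i _ => pow_nonneg hratio i)
      (fun i _ => by positivity) fun i _ => le_of_eq ?_
    rw [div_pow, ← mul_assoc, div_mul_cancel₀ _ (pow_ne_zero i hb.ne')]
    ring
  refine hcs.trans (mul_le_mul_of_nonneg_right ?_ (sum_nonneg fun i _ => by positivity))
  exact geom_sum_range_le_inv_one_sub hratio ((div_lt_one hb).2 hab) n

end

theorem abs_div_sqrt_add_le_sqrt {m v C ε : ℝ} (h : m ^ 2 ≤ C * v) (hv : 0 ≤ v) (hε : 0 ≤ ε) :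
    |m| / (√v + ε) ≤ √C := by
  have hm : |m| ≤ √C * √v := by
    rw [← Real.sqrt_sq_eq_abs, ← Real.sqrt_mul' C hv]
    exact Real.sqrt_le_sqrt h
  refine div_le_of_le_mul₀ (by positivity) (Real.sqrt_nonneg C) (hm.trans ?_)
  exact mul_le_mul_of_nonneg_left (le_add_of_nonneg_right hε) (Real.sqrt_nonneg C)

theorem adam_momentum_ratio_bound_general (β1 β2 : ℝ)
    (hβ2_lt : β2 < 1)
    (hβ12 : β1 ^ 2 < β2) (t : ℕ) (g : ℕ → ℝ) :
    (∑ τ ∈ Finset.range t, β1 ^ τ * (1 - β1) * g τ) ^ 2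
      ≤ ((1 - β1) ^ 2 / ((1 - β2) * (1 - β1 ^ 2 / β2))) *
        (∑ τ ∈ Finset.range t, β2 ^ τ * (1 - β2) * g τ ^ 2) ∧
    ∀ ε > (0 : ℝ),
      |∑ τ ∈ Finset.range t, β1 ^ τ * (1 - β1) * g τ| /
          (Real.sqrt (∑ τ ∈ Finset.range t, β2 ^ τ * (1 - β2) * g τ ^ 2) + ε)
        ≤ Real.sqrt ((1 - β1) ^ 2 / ((1 - β2) * (1 - β1 ^ 2 / β2))) := by
  have hβ2_pos : 0 < β2 := (sq_nonneg β1).trans_lt hβ12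
  have hv : 0 ≤ ∑ τ ∈ range t, β2 ^ τ * (1 - β2) * g τ ^ 2 :=
    sum_nonneg fun τ _ => mul_nonneg (mul_nonneg (pow_nonneg hβ2_pos.le τ) (by linarith))
      (sq_nonneg _)
  have hbound : (∑ τ ∈ range t, β1 ^ τ * (1 - β1) * g τ) ^ 2
      ≤ ((1 - β1) ^ 2 / ((1 - β2) * (1 - β1 ^ 2 / β2))) *
        (∑ τ ∈ range t, β2 ^ τ * (1 - β2) * g τ ^ 2) := by
    have hr : 0 < 1 - β1 ^ 2 / β2 := sub_pos.2 ((div_lt_one hβ2_pos).2 hβ12)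
    simp_rw [mul_right_comm _ (1 - β1), mul_right_comm _ (1 - β2), ← sum_mul]
    calc _ = (1 - β1) ^ 2 * (∑ τ ∈ range t, β1 ^ τ * g τ) ^ 2 := by ring
      _ ≤ (1 - β1) ^ 2 * ((1 - β1 ^ 2 / β2)⁻¹ * ∑ τ ∈ range t, β2 ^ τ * g τ ^ 2) :=
        mul_le_mul_of_nonneg_left (sq_sum_pow_mul_le hβ12 t g) (sq_nonneg _)
      _ = _ := by field_simp [(sub_pos.2 hβ2_lt).ne', hr.ne']
  exact ⟨hbound, fun ε hε => abs_div_sqrt_add_le_sqrt hbound hv hε.le⟩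

/-- For Adam momentum estimates
`m = Σ_{τ<t} β₁^τ (1−β₁) g_τ` and `v = Σ_{τ<t} β₂^τ (1−β₂) g_τ²` with
`β₁, β₂ ∈ [0,1)`, `β₁² < β₂`, one has `m² ≤ C·v` with
`C = (1−β₁)²/((1−β₂)(1−β₁²/β₂))`, and hence `|m|/(√v + ε) ≤ √C` for every `ε > 0`. -/
theorem adam_momentum_ratio_bound (β1 β2 : ℝ)
    (hβ1_nonneg : 0 ≤ β1) (hβ1_lt : β1 < 1) (hβ2_nonneg : 0 ≤ β2) (hβ2_lt : β2 < 1)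
    (hβ12 : β1 ^ 2 < β2) (t : ℕ) (ht : 1 ≤ t) (g : ℕ → ℝ) :
    (∑ τ ∈ Finset.range t, β1 ^ τ * (1 - β1) * g τ) ^ 2
      ≤ ((1 - β1) ^ 2 / ((1 - β2) * (1 - β1 ^ 2 / β2))) *
        (∑ τ ∈ Finset.range t, β2 ^ τ * (1 - β2) * g τ ^ 2) ∧
    ∀ ε > (0 : ℝ),
      |∑ τ ∈ Finset.range t, β1 ^ τ * (1 - β1) * g τ| /
          (Real.sqrt (∑ τ ∈ Finset.range t, β2 ^ τ * (1 - β2) * g τ ^ 2) + ε)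
        ≤ Real.sqrt ((1 - β1) ^ 2 / ((1 - β2) * (1 - β1 ^ 2 / β2))) :=
  adam_momentum_ratio_bound_general β1 β2 hβ2_lt hβ12 t g
end

section
/- Fix weights W, j ∈ {−1,1}, r ∈ {1,…,m}, λ ≥ 0, η > 0, and a batch I ⊆ {1,…,n} of size B ≥ 1, and let g = (1/B) Σ_{i∈I} ∇_{w_{j,r}} L_i(W) + λ·w_{j,r}. Define the SignSGD update w'_{j,r} = w_{j,r} − η·sgn(g), with sgn applied coordinatewise. Then ⟨w'_{j,r}, j·v⟩ = ⟨w_{j,r}, j·v⟩ + j·η·sgn( Σ_{i∈I} y_i ℓ_{j,i} [ σ'(⟨w_{j,r}, y_i·v⟩) − α σ'(⟨w_{j,r}, ξ_i⟩) ] − B λ w_{j,r}[1] ). -/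
/-!
Only the logit `F_j` depends on `w_{j,r}`, and the two-class cross-entropy has derivative `-ℓ_j`
in that logit, so `∇_{w_{j,r}} L_i = -ℓ_{j,i} (σ'(⟨w, y_i v⟩) y_i v + σ'(⟨w, ξ_i⟩) ξ_i)`. Its first
coordinate is `-y_i ℓ_{j,i} (σ'(⟨w, y_i v⟩) - α σ'(⟨w, ξ_i⟩))` because `ξ_i[1] = -α y_i`. The
update changes `⟨w, j v⟩` by `-η j sgn(g[1])`, and `g[1]` is `-1/B` times the bracket of the claim;
a positive factor does not change the sign.
-/

open scoped RealInnerProductSpace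

noncomputable section SignSGDFeature

/-- Derivative of the polynomial ReLU activation `σ(z) = (max z 0)^q`. -/
def actD (q : ℕ) (z : ℝ) : ℝ := (q : ℝ) * (max z 0) ^ (q - 1)

/-- Output `F_j(W, x)` of the two-layer CNN on the input with patches `x₁, x₂`. -/
def cnnOut (q : ℕ) {d m : ℕ} (W : ℝ → Fin m → EuclideanSpace ℝ (Fin d))
    (j : ℝ) (x1 x2 : EuclideanSpace ℝ (Fin d)) : ℝ :=
  ∑ r : Fin m, ((max ⟪W j r, x1⟫ 0) ^ q + (max ⟪W j r, x2⟫ 0) ^ q)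

/-- Cross-entropy loss of the CNN on a sample with label `y` and patches `x₁, x₂`. -/
def cnnLoss (q : ℕ) {d m : ℕ} (W : ℝ → Fin m → EuclideanSpace ℝ (Fin d))
    (y : ℝ) (x1 x2 : EuclideanSpace ℝ (Fin d)) : ℝ :=
  -Real.log (Real.exp (cnnOut q W y x1 x2) /
    (Real.exp (cnnOut q W 1 x1 x2) + Real.exp (cnnOut q W (-1) x1 x2)))

/-- The quantity `ℓ_j = 𝟙[y = j] − exp(F_j)/(exp F₁ + exp F₋₁)` for a sample. -/
def ellC (q : ℕ) {d m : ℕ} (W : ℝ → Fin m → EuclideanSpace ℝ (Fin d))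
    (j y : ℝ) (x1 x2 : EuclideanSpace ℝ (Fin d)) : ℝ :=
  (if y = j then (1 : ℝ) else 0) - Real.exp (cnnOut q W j x1 x2) /
    (Real.exp (cnnOut q W 1 x1 x2) + Real.exp (cnnOut q W (-1) x1 x2))

/-- Replace the filter `w_{j,r}` of `W` by `w`, keeping all other filters fixed. -/
def updW {d m : ℕ} (W : ℝ → Fin m → EuclideanSpace ℝ (Fin d)) (j : ℝ) (r : Fin m)
    (w : EuclideanSpace ℝ (Fin d)) : ℝ → Fin m → EuclideanSpace ℝ (Fin d) :=
  Function.update W j (Function.update (W j) r w)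

/-- The coordinatewise sign of a vector. -/
def signVec {d : ℕ} (g : EuclideanSpace ℝ (Fin d)) : EuclideanSpace ℝ (Fin d) :=
  WithLp.toLp 2 (fun k => Real.sign (g k))

lemma Real.sign_mul_of_pos_left {c : ℝ} (hc : 0 < c) (x : ℝ) :
    Real.sign (c * x) = Real.sign x := by
  rcases lt_trichotomy x 0 with hx | rfl | hx
  · rw [Real.sign_of_neg hx, Real.sign_of_neg (mul_neg_of_pos_of_neg hc hx)]
  · rw [mul_zero]
  · rw [Real.sign_of_pos hx, Real.sign_of_pos (mul_pos hc hx)]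

lemma hasDerivAt_max_zero_pow {q : ℕ} (hq : 2 ≤ q) (t : ℝ) :
    HasDerivAt (fun z : ℝ => max z 0 ^ q) (actD q t) t := by
  rcases lt_trichotomy t 0 with ht | rfl | ht
  · have hzero : (fun z : ℝ => max z 0 ^ q) =ᶠ[nhds t] fun _ => 0 := by
      filter_upwards [eventually_lt_nhds ht] with z hz
      rw [max_eq_right hz.le, zero_pow (by omega)]
    rw [actD, max_eq_right ht.le, zero_pow (by omega), mul_zero]
    exact (hasDerivAt_const t 0).congr_of_eventuallyEq hzero
  · -- `|max h 0 ^ q| ≤ |h| ^ q = o(h)` since `q ≥ 2`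
    rw [hasDerivAt_iff_isLittleO_nhds_zero]
    have hbound : (fun h : ℝ => max h 0 ^ q) =O[nhds 0] fun h : ℝ => h ^ q :=
      Asymptotics.IsBigO.of_bound 1 (Filter.Eventually.of_forall fun h => by
        rw [one_mul, norm_pow, norm_pow, Real.norm_of_nonneg (le_max_right h 0)]
        exact pow_le_pow_left₀ (le_max_right h 0) (max_le (le_abs_self h) (abs_nonneg h)) q)
    simpa [actD, zero_pow (show q ≠ 0 by omega), zero_pow (show q - 1 ≠ 0 by omega)] using
      hbound.trans_isLittleO (Asymptotics.isLittleO_pow_id (by omega))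
  · have hpow : (fun z : ℝ => max z 0 ^ q) =ᶠ[nhds t] fun z => z ^ q := by
      filter_upwards [eventually_gt_nhds ht] with z hz
      rw [max_eq_left hz.le]
    rw [actD, max_eq_left ht.le]
    exact (hasDerivAt_pow q t).congr_of_eventuallyEq hpow

section Gradient

variable {F : Type*} [NormedAddCommGroup F] [InnerProductSpace ℝ F] [CompleteSpace F]

lemma hasGradientAt_inner_left (a x : F) : HasGradientAt (fun w : F => ⟪w, a⟫) a x := by
  rw [hasGradientAt_iff_hasFDerivAt]
  have hcomm : (fun w : F => ⟪w, a⟫) = innerSL ℝ a := funext fun w => real_inner_comm a w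
  rw [hcomm]
  exact (innerSL ℝ a).hasFDerivAt

lemma HasGradientAt.add {f g : F → ℝ} {f' g' x : F} (hf : HasGradientAt f f' x)
    (hg : HasGradientAt g g' x) : HasGradientAt (fun w => f w + g w) (f' + g') x := by
  rw [hasGradientAt_iff_hasFDerivAt] at *
  rw [map_add]
  exact hf.add hg

lemma HasDerivAt.comp_hasGradientAt {φ : ℝ → ℝ} {φ' : ℝ} {f : F → ℝ} {f' x : F}
    (hφ : HasDerivAt φ φ' (f x)) (hf : HasGradientAt f f' x) :
    HasGradientAt (φ ∘ f) (φ' • f') x := by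
  rw [hasGradientAt_iff_hasFDerivAt] at *
  simpa using hφ.comp_hasFDerivAt x hf

end Gradient

lemma hasDerivAt_crossEntropy (c : Prop) [Decidable c] (a b u : ℝ) :
    HasDerivAt (fun u => -(if c then u + a else b) + Real.log (Real.exp (u + a) + Real.exp b))
      (-((if c then 1 else 0) - Real.exp (u + a) / (Real.exp (u + a) + Real.exp b))) u := by
  have hsum : HasDerivAt (fun u => Real.exp (u + a) + Real.exp b) (Real.exp (u + a)) u := by
    simpa using (((hasDerivAt_id u).add_const a).exp).add_const (Real.exp b)
  have hlabel : HasDerivAt (fun u => -(if c then u + a else b)) (-(if c then 1 else 0)) u := by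
    split_ifs
    · exact ((hasDerivAt_id u).add_const a).neg
    · simpa using hasDerivAt_const u (-b)
  exact (hlabel.fun_add (hsum.log (by positivity))).congr_deriv (by ring)

lemma add_apply_neg_eq_of_pm (G : ℝ → ℝ) {j : ℝ} (hj : j = 1 ∨ j = -1) :
    G 1 + G (-1) = G j + G (-j) := by
  rcases hj with rfl | rfl
  · rfl
  · rw [neg_neg, add_comm]

lemma apply_eq_ite_of_pm (G : ℝ → ℝ) {j y : ℝ} (hj : j = 1 ∨ j = -1) (hy : y = 1 ∨ y = -1) :
    G y = if y = j then G j else G (-j) := by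
  rcases hj with rfl | rfl <;> rcases hy with rfl | rfl <;> norm_num

section CNN

variable {d m : ℕ}

def filterOut (q : ℕ) (w x1 x2 : EuclideanSpace ℝ (Fin d)) : ℝ :=
  max ⟪w, x1⟫ 0 ^ q + max ⟪w, x2⟫ 0 ^ q

lemma cnnOut_eq_add_sum_erase (q : ℕ) (W : ℝ → Fin m → EuclideanSpace ℝ (Fin d)) (j : ℝ)
    (r : Fin m) (x1 x2 : EuclideanSpace ℝ (Fin d)) :
    cnnOut q W j x1 x2 =
      filterOut q (W j r) x1 x2 + ∑ r' ∈ Finset.univ.erase r, filterOut q (W j r') x1 x2 :=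
  (Finset.add_sum_erase _ _ (Finset.mem_univ r)).symm

lemma cnnOut_updW_self (q : ℕ) (W : ℝ → Fin m → EuclideanSpace ℝ (Fin d)) (j : ℝ) (r : Fin m)
    (w x1 x2 : EuclideanSpace ℝ (Fin d)) :
    cnnOut q (updW W j r w) j x1 x2 =
      filterOut q w x1 x2 + ∑ r' ∈ Finset.univ.erase r, filterOut q (W j r') x1 x2 := by
  rw [cnnOut_eq_add_sum_erase q _ j r, updW, Function.update_self, Function.update_self]
  congr 1
  exact Finset.sum_congr rfl fun r' hr' => by
    rw [Function.update_of_ne (Finset.ne_of_mem_erase hr')]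

lemma cnnOut_updW_of_ne (q : ℕ) (W : ℝ → Fin m → EuclideanSpace ℝ (Fin d)) {j j' : ℝ}
    (h : j' ≠ j) (r : Fin m) (w x1 x2 : EuclideanSpace ℝ (Fin d)) :
    cnnOut q (updW W j r w) j' x1 x2 = cnnOut q W j' x1 x2 := by
  rw [cnnOut, updW, Function.update_of_ne h, cnnOut]

lemma cnnLoss_eq_of_pm (q : ℕ) (W : ℝ → Fin m → EuclideanSpace ℝ (Fin d)) {j y : ℝ}
    (hj : j = 1 ∨ j = -1) (hy : y = 1 ∨ y = -1) (x1 x2 : EuclideanSpace ℝ (Fin d)) :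
    cnnLoss q W y x1 x2 =
      -(if y = j then cnnOut q W j x1 x2 else cnnOut q W (-j) x1 x2) +
        Real.log (Real.exp (cnnOut q W j x1 x2) + Real.exp (cnnOut q W (-j) x1 x2)) := by
  rw [cnnLoss, Real.log_div (Real.exp_ne_zero _) (by positivity), Real.log_exp,
    apply_eq_ite_of_pm (fun k => cnnOut q W k x1 x2) hj hy,
    add_apply_neg_eq_of_pm (fun k => Real.exp (cnnOut q W k x1 x2)) hj]
  ring

lemma ellC_eq_of_pm (q : ℕ) (W : ℝ → Fin m → EuclideanSpace ℝ (Fin d)) {j : ℝ}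
    (hj : j = 1 ∨ j = -1) (y : ℝ) (x1 x2 : EuclideanSpace ℝ (Fin d)) :
    ellC q W j y x1 x2 = (if y = j then 1 else 0) -
      Real.exp (cnnOut q W j x1 x2) /
        (Real.exp (cnnOut q W j x1 x2) + Real.exp (cnnOut q W (-j) x1 x2)) := by
  rw [ellC, add_apply_neg_eq_of_pm (fun k => Real.exp (cnnOut q W k x1 x2)) hj]

lemma hasGradientAt_filterOut {q : ℕ} (hq : 2 ≤ q) (w x1 x2 : EuclideanSpace ℝ (Fin d)) :
    HasGradientAt (fun w => filterOut q w x1 x2)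
      (actD q ⟪w, x1⟫ • x1 + actD q ⟪w, x2⟫ • x2) w :=
  ((hasDerivAt_max_zero_pow hq _).comp_hasGradientAt (hasGradientAt_inner_left x1 w)).add
    ((hasDerivAt_max_zero_pow hq _).comp_hasGradientAt (hasGradientAt_inner_left x2 w))

lemma hasGradientAt_cnnLoss_updW {q : ℕ} (hq : 2 ≤ q) (W : ℝ → Fin m → EuclideanSpace ℝ (Fin d))
    {j y : ℝ} (hj : j = 1 ∨ j = -1) (hy : y = 1 ∨ y = -1) (r : Fin m)
    (x1 x2 : EuclideanSpace ℝ (Fin d)) :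
    HasGradientAt (fun w => cnnLoss q (updW W j r w) y x1 x2)
      (-ellC q W j y x1 x2 • (actD q ⟪W j r, x1⟫ • x1 + actD q ⟪W j r, x2⟫ • x2)) (W j r) := by
  set K := ∑ r' ∈ Finset.univ.erase r, filterOut q (W j r') x1 x2
  set b := cnnOut q W (-j) x1 x2
  have hneg : -j ≠ j := by rcases hj with rfl | rfl <;> norm_num
  have hloss : (fun w => cnnLoss q (updW W j r w) y x1 x2) =
      (fun u => -(if y = j then u + K else b) + Real.log (Real.exp (u + K) + Real.exp b)) ∘
        fun w => filterOut q w x1 x2 := by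
    funext w
    rw [Function.comp_apply, cnnLoss_eq_of_pm q _ hj hy, cnnOut_updW_self,
      cnnOut_updW_of_ne q W hneg]
  rw [hloss, ellC_eq_of_pm q W hj, cnnOut_eq_add_sum_erase q W j r]
  exact (hasDerivAt_crossEntropy _ K b _).comp_hasGradientAt (hasGradientAt_filterOut hq _ x1 x2)

end CNN

lemma inner_signVec_single {d : ℕ} (g : EuclideanSpace ℝ (Fin d)) (k : Fin d) (a : ℝ) :
    ⟪signVec g, EuclideanSpace.single k a⟫ = a * Real.sign (g k) := by
  simp [signVec, EuclideanSpace.inner_single_right]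

theorem signsgd_feature_learning_update_general
    (d m n q : ℕ) [NeZero d] (hq : 3 ≤ q)
    (α : ℝ)
    (y : Fin n → ℝ) (hy : ∀ i, y i = 1 ∨ y i = -1)
    (ξ : Fin n → EuclideanSpace ℝ (Fin d))
    (hξ1 : ∀ i, ξ i 0 = -α * y i)
    (W : ℝ → Fin m → EuclideanSpace ℝ (Fin d))
    (j : ℝ) (hj : j = 1 ∨ j = -1) (r : Fin m)
    (lam : ℝ) (η : ℝ)
    (I : Finset (Fin n)) (hI : 1 ≤ I.card) :
    let v : EuclideanSpace ℝ (Fin d) := EuclideanSpace.single 0 1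
    let g : EuclideanSpace ℝ (Fin d) :=
      (I.card : ℝ)⁻¹ •
        (∑ i ∈ I, gradient (fun w => cnnLoss q (updW W j r w) (y i) (y i • v) (ξ i)) (W j r))
      + lam • W j r
    let w' : EuclideanSpace ℝ (Fin d) := W j r - η • signVec g
    ⟪w', j • v⟫ = ⟪W j r, j • v⟫ + j * η * Real.sign
      ((∑ i ∈ I, y i * ellC q W j (y i) (y i • v) (ξ i) *
          (actD q ⟪W j r, y i • v⟫ - α * actD q ⟪W j r, ξ i⟫))
        - I.card * lam * W j r 0) := by
  intro v g w'
  set S := ∑ i ∈ I, y i * ellC q W j (y i) (y i • v) (ξ i) *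
    (actD q ⟪W j r, y i • v⟫ - α * actD q ⟪W j r, ξ i⟫)
  have hB : (0 : ℝ) < I.card := by exact_mod_cast hI
  have hgrad : ∀ i ∈ I, (gradient (fun w => cnnLoss q (updW W j r w) (y i) (y i • v) (ξ i))
      (W j r)) 0 = -(y i * ellC q W j (y i) (y i • v) (ξ i) *
        (actD q ⟪W j r, y i • v⟫ - α * actD q ⟪W j r, ξ i⟫)) := fun i _ => by
    rw [(hasGradientAt_cnnLoss_updW (by omega) W hj (hy i) r _ _).gradient]
    simp only [PiLp.smul_apply, PiLp.add_apply, smul_eq_mul, v, hξ1,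
      PiLp.single_apply, if_true]
    ring
  have hg0 : g 0 = (I.card : ℝ)⁻¹ * -(S - I.card * lam * W j r 0) := by
    simp only [g, PiLp.add_apply, PiLp.smul_apply, smul_eq_mul, WithLp.ofLp_sum,
      Finset.sum_apply, Finset.sum_congr rfl hgrad, Finset.sum_neg_distrib]
    field_simp
    ring
  calc ⟪w', j • v⟫ = ⟪W j r, j • v⟫ - η * (j * Real.sign (g 0)) := by
        simp only [w', v, inner_sub_left, real_inner_smul_left, real_inner_smul_right,
          inner_signVec_single]
        ring
    _ = _ := by
        rw [hg0, Real.sign_mul_of_pos_left (inv_pos.mpr hB), Real.sign_neg]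
        ring

/-- effect of one SignSGD step
`w' = w_{j,r} − η·sgn(g)`, `g = (1/B) Σ_{i∈I} ∇_{w_{j,r}} L_i(W) + λ·w_{j,r}`, on the
feature-learning quantity `⟨w_{j,r}, j·v⟩`. -/
theorem signsgd_feature_learning_update
    (d m n q : ℕ) [NeZero d] (hd : 2 ≤ d) (hm : 1 ≤ m) (hq : 3 ≤ q)
    (α : ℝ) (hα0 : 0 < α) (hα1 : α < 1)
    (y : Fin n → ℝ) (hy : ∀ i, y i = 1 ∨ y i = -1)
    (Bs : Fin n → Finset (Fin d))
    (hB1 : ∀ i, (0 : Fin d) ∉ Bs i)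
    (hBdisj : ∀ i i', i ≠ i' → Disjoint (Bs i) (Bs i'))
    (ξ : Fin n → EuclideanSpace ℝ (Fin d))
    (hξ1 : ∀ i, ξ i 0 = -α * y i)
    (hξ0 : ∀ i, ∀ k : Fin d, k ≠ 0 → k ∉ Bs i → ξ i k = 0)
    (W : ℝ → Fin m → EuclideanSpace ℝ (Fin d))
    (j : ℝ) (hj : j = 1 ∨ j = -1) (r : Fin m)
    (lam : ℝ) (hlam : 0 ≤ lam) (η : ℝ) (hη : 0 < η)
    (I : Finset (Fin n)) (hI : 1 ≤ I.card) :
    let v : EuclideanSpace ℝ (Fin d) := EuclideanSpace.single 0 1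
    let g : EuclideanSpace ℝ (Fin d) :=
      (I.card : ℝ)⁻¹ •
        (∑ i ∈ I, gradient (fun w => cnnLoss q (updW W j r w) (y i) (y i • v) (ξ i)) (W j r))
      + lam • W j r
    let w' : EuclideanSpace ℝ (Fin d) := W j r - η • signVec g
    ⟪w', j • v⟫ = ⟪W j r, j • v⟫ + j * η * Real.sign
      ((∑ i ∈ I, y i * ellC q W j (y i) (y i • v) (ξ i) *
          (actD q ⟪W j r, y i • v⟫ - α * actD q ⟪W j r, ξ i⟫))
        - I.card * lam * W j r 0) :=
  signsgd_feature_learning_update_general d m n q hq α y hy ξ hξ1 W j hj r lam η I hI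

end SignSGDFeature
end
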